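/- The error-corrected score satisfies the moment condition at the true parameters: E[ψ(W; θ0, η0)] = E[(Y − D·θ0 − Z'β0)(D − Z'γ0) − τ0·β0'γ0] = 0, where η0 = (β0, γ0, τ0). -/

import Mathlib

open MeasureTheory Finset

/-!
Substituting the model, the two residuals at the true parameters are `U − A'β0` and `V − A'γ0`:
the terms in `D` and `X` cancel and only the measurement error survives. Expanding their product,
the cross moments of `A` with `U` and `V` vanish, while `E[AA'] = τ0 I` turns the remaining
quadratic term into `τ0 β0'γ0`, which is exactly the correction subtracted in the score.
-/

namespace MeasureTheory

variable {Ω ι : Type*} [MeasurableSpace Ω] {μ : Measure Ω} [Fintype ι]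

lemma MemLp.integrable_mul_of_two {f g : Ω → ℝ} (hf : MemLp f 2 μ) (hg : MemLp g 2 μ) :
    Integrable (fun ω => f ω * g ω) μ :=
  hf.integrable_mul hg

lemma memLp_sum_const_mul {a : Ω → ι → ℝ} (ha : ∀ j, MemLp (fun ω => a ω j) 2 μ) (c : ι → ℝ) :
    MemLp (fun ω => ∑ j, c j * a ω j) 2 μ :=
  memLp_finsetSum _ fun j _ => (ha j).const_mul (c j)

lemma integral_mul_sum_const_mul {f : Ω → ℝ} {a : Ω → ι → ℝ} (hf : MemLp f 2 μ)
    (ha : ∀ j, MemLp (fun ω => a ω j) 2 μ) (c : ι → ℝ) :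
    ∫ ω, f ω * ∑ j, c j * a ω j ∂μ = ∑ j, c j * ∫ ω, f ω * a ω j ∂μ := by
  simp_rw [mul_sum, mul_left_comm (f _)]
  rw [integral_finsetSum _ fun j _ => (hf.integrable_mul_of_two (ha j)).const_mul (c j)]
  simp_rw [integral_const_mul]

lemma integral_sum_const_mul_mul_sum_const_mul {a : Ω → ι → ℝ}
    (ha : ∀ j, MemLp (fun ω => a ω j) 2 μ) (b c : ι → ℝ) :
    ∫ ω, (∑ j, b j * a ω j) * ∑ k, c k * a ω k ∂μ
      = ∑ j, ∑ k, b j * c k * ∫ ω, a ω j * a ω k ∂μ := by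
  simp_rw [sum_mul, mul_assoc]
  rw [integral_finsetSum _ fun j _ =>
    ((ha j).integrable_mul_of_two (memLp_sum_const_mul ha c)).const_mul (b j)]
  simp_rw [integral_const_mul, integral_mul_sum_const_mul (ha _) ha c, mul_sum]

lemma integral_sum_const_mul_mul_sum_const_mul_of_isotropic [DecidableEq ι]
    {a : Ω → ι → ℝ} {τ : ℝ} (ha : ∀ j, MemLp (fun ω => a ω j) 2 μ)
    (haa : ∀ j k, ∫ ω, a ω j * a ω k ∂μ = if j = k then τ else 0) (b c : ι → ℝ) :
    ∫ ω, (∑ j, b j * a ω j) * ∑ k, c k * a ω k ∂μ = τ * ∑ j, b j * c j := by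
  rw [integral_sum_const_mul_mul_sum_const_mul ha]
  simp [haa, mul_sum, mul_comm]

lemma integral_sub_sum_const_mul_mul_sub_sum_const_mul_of_isotropic [DecidableEq ι]
    {u v : Ω → ℝ} {a : Ω → ι → ℝ} {τ : ℝ} (hu : MemLp u 2 μ) (hv : MemLp v 2 μ)
    (ha : ∀ j, MemLp (fun ω => a ω j) 2 μ)
    (haa : ∀ j k, ∫ ω, a ω j * a ω k ∂μ = if j = k then τ else 0)
    (huv : ∫ ω, u ω * v ω ∂μ = 0) (hua : ∀ j, ∫ ω, u ω * a ω j ∂μ = 0)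
    (hva : ∀ j, ∫ ω, v ω * a ω j ∂μ = 0) (b c : ι → ℝ) :
    ∫ ω, (u ω - ∑ j, b j * a ω j) * (v ω - ∑ j, c j * a ω j) ∂μ = τ * ∑ j, b j * c j := by
  have hb := memLp_sum_const_mul ha b
  have hc := memLp_sum_const_mul ha c
  have hexpand : ∀ ω, (u ω - ∑ j, b j * a ω j) * (v ω - ∑ j, c j * a ω j)
      = u ω * v ω - u ω * (∑ j, c j * a ω j) - v ω * (∑ j, b j * a ω j)
        + (∑ j, b j * a ω j) * ∑ j, c j * a ω j := fun ω => by ring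
  simp_rw [hexpand]
  have huv' := hu.integrable_mul_of_two hv
  have huc := hu.integrable_mul_of_two hc
  have hvb := hv.integrable_mul_of_two hb
  rw [integral_add, integral_sub, integral_sub, integral_mul_sum_const_mul hu ha,
    integral_mul_sum_const_mul hv ha, integral_sum_const_mul_mul_sum_const_mul_of_isotropic ha haa]
  · simp [huv, hua, hva]
  exacts [huv', huc, huv'.sub huc, hvb, (huv'.sub huc).sub hvb, hb.integrable_mul_of_two hc]

end MeasureTheory

theorem corrected_score_moment_condition_general
    {Ω : Type*} [MeasurableSpace Ω] {μ : Measure Ω} [IsProbabilityMeasure μ]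
    {p : ℕ} (Y D U V : Ω → ℝ) (X A Z : Ω → Fin p → ℝ)
    (θ0 τ0 : ℝ) (β0 γ0 : Fin p → ℝ)
    (hY : ∀ ω, Y ω = θ0 * D ω + (∑ j, β0 j * X ω j) + U ω)
    (hD : ∀ ω, D ω = (∑ j, γ0 j * X ω j) + V ω)
    (hZ : ∀ ω j, Z ω j = X ω j + A ω j)
    -- square integrability of all the random variables involved
    (hL2U : MemLp U 2 μ) (hL2V : MemLp V 2 μ)
    (hL2A : ∀ j, MemLp (fun ω => A ω j) 2 μ)
    -- measurement-error moments: E[A] = 0 and E[AA'] = τ0 I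
    (hAA : ∀ j k, ∫ ω, A ω j * A ω k ∂μ = if j = k then τ0 else 0)
    -- orthogonality moment conditions
    (hUV : ∫ ω, U ω * V ω ∂μ = 0)
    (hUA : ∀ j, ∫ ω, U ω * A ω j ∂μ = 0)
    (hVA : ∀ j, ∫ ω, V ω * A ω j ∂μ = 0) :
    ∫ ω, ((Y ω - D ω * θ0 - ∑ j, β0 j * Z ω j) * (D ω - ∑ j, γ0 j * Z ω j)
        - τ0 * ∑ j, β0 j * γ0 j) ∂μ = 0 := by
  have hresiduals : ∀ ω, (Y ω - D ω * θ0 - ∑ j, β0 j * Z ω j) * (D ω - ∑ j, γ0 j * Z ω j)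
      = (U ω - ∑ j, β0 j * A ω j) * (V ω - ∑ j, γ0 j * A ω j) := fun ω => by
    simp only [hY, hD, hZ, mul_add, sum_add_distrib]
    ring
  have hprod : Integrable (fun ω => (U ω - ∑ j, β0 j * A ω j) * (V ω - ∑ j, γ0 j * A ω j)) μ :=
    (hL2U.sub (memLp_sum_const_mul hL2A β0)).integrable_mul_of_two
      (hL2V.sub (memLp_sum_const_mul hL2A γ0))
  simp_rw [hresiduals]
  rw [integral_sub hprod (integrable_const _), integral_const,
    integral_sub_sum_const_mul_mul_sub_sum_const_mul_of_isotropic hL2U hL2V hL2A hAA hUV hUA hVA]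
  simp

/-- The error-corrected score satisfies the moment condition at the
true parameters: `E[(Y − D·θ0 − Z'β0)(D − Z'γ0) − τ0·β0'γ0] = 0`. -/
theorem corrected_score_moment_condition
    {Ω : Type*} [MeasurableSpace Ω] {μ : Measure Ω} [IsProbabilityMeasure μ]
    {p : ℕ} (Y D U V : Ω → ℝ) (X A Z : Ω → Fin p → ℝ)
    (θ0 τ0 : ℝ) (β0 γ0 : Fin p → ℝ)
    (hτ0 : 0 < τ0)
    (hY : ∀ ω, Y ω = θ0 * D ω + (∑ j, β0 j * X ω j) + U ω)
    (hD : ∀ ω, D ω = (∑ j, γ0 j * X ω j) + V ω)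
    (hZ : ∀ ω j, Z ω j = X ω j + A ω j)
    -- square integrability of all the random variables involved
    (hL2Y : MemLp Y 2 μ) (hL2D : MemLp D 2 μ)
    (hL2U : MemLp U 2 μ) (hL2V : MemLp V 2 μ)
    (hL2X : ∀ j, MemLp (fun ω => X ω j) 2 μ)
    (hL2A : ∀ j, MemLp (fun ω => A ω j) 2 μ)
    -- measurement-error moments: E[A] = 0 and E[AA'] = τ0 I
    (hA0 : ∀ j, ∫ ω, A ω j ∂μ = 0)
    (hAA : ∀ j k, ∫ ω, A ω j * A ω k ∂μ = if j = k then τ0 else 0)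
    -- orthogonality moment conditions
    (hUV : ∫ ω, U ω * V ω ∂μ = 0)
    (hUX : ∀ j, ∫ ω, U ω * X ω j ∂μ = 0)
    (hVX : ∀ j, ∫ ω, V ω * X ω j ∂μ = 0)
    (hUA : ∀ j, ∫ ω, U ω * A ω j ∂μ = 0)
    (hVA : ∀ j, ∫ ω, V ω * A ω j ∂μ = 0)
    (hDA : ∀ j, ∫ ω, D ω * A ω j ∂μ = 0)
    (hXA : ∀ j k, ∫ ω, X ω j * A ω k ∂μ = 0) :
    ∫ ω, ((Y ω - D ω * θ0 - ∑ j, β0 j * Z ω j) * (D ω - ∑ j, γ0 j * Z ω j)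
        - τ0 * ∑ j, β0 j * γ0 j) ∂μ = 0 :=
  corrected_score_moment_condition_general Y D U V X A Z θ0 τ0 β0 γ0 hY hD hZ hL2U hL2V hL2A hAA hUV
    hUA hVA
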